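/- arXiv:math/0702660 — 2 statements merged into one kernel-verified Lean document; each statement's English description precedes it below -/
import Mathlib

section
/- Suppose U_J : ℂ → ℝ satisfies U_J(ψ) ≥ A_J − B_J|ψ|² with A_J ∈ ℝ, B_J ≥ 0 and ∑_J B_J < m. Then for any Ψ = (ψ, π) ∈ H¹(ℝ) × L²(ℝ), the Hamiltonian H(Ψ) = ½∫(|π|² + |ψ'|² + m²|ψ|²)dx + ∑_J U_J(ψ(X_J)) satisfies ‖Ψ‖²_E ≤ (2m/(m − ∑_J B_J))·(H(Ψ) − ∑_J A_J), where ‖Ψ‖²_E = ‖π‖²_{L²} + ‖ψ'‖²_{L²} + m²‖ψ‖²_{L²}. -/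
open MeasureTheory

/-!
Since `m ‖ψ‖²` has derivative `2m ⟪ψ, ψ'⟫`, whose absolute value is at most `m²‖ψ‖² + ‖ψ'‖²`,
integrating from `-∞` and from `+∞` to a point gives `2m ‖ψ(x)‖² ≤ ‖Ψ‖²_E` for every `x`.
Hence each `U_J(ψ(X_J)) ≥ A_J − B_J ‖Ψ‖²_E / (2m)`, so `H(Ψ) − ∑ A_J ≥ (m − ∑ B_J) ‖Ψ‖²_E / (2m)`.
-/

/-- `g` vanishes at `±∞`, so `g x₀` is the integral of `g'` over either half-line. -/
theorem two_mul_norm_le_integral_norm_deriv {E : Type*} [NormedAddCommGroup E] [NormedSpace ℝ E]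
    [CompleteSpace E] {g g' : ℝ → E} (hg : ∀ x, HasDerivAt g (g' x) x) (hg_int : Integrable g)
    (hg'_int : Integrable g') (x₀ : ℝ) :
    2 * ‖g x₀‖ ≤ ∫ x, ‖g' x‖ := by
  have h_left : ∫ x in Set.Iic x₀, g' x = g x₀ - 0 :=
    integral_Iic_of_hasDerivAt_of_tendsto' (fun x _ => hg x) hg'_int.integrableOn
      (tendsto_zero_of_hasDerivAt_of_integrableOn_Iic (a := x₀) (fun x _ => hg x)
        hg'_int.integrableOn hg_int.integrableOn)
  have h_right : ∫ x in Set.Ioi x₀, g' x = 0 - g x₀ :=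
    integral_Ioi_of_hasDerivAt_of_tendsto' (fun x _ => hg x) hg'_int.integrableOn
      (tendsto_zero_of_hasDerivAt_of_integrableOn_Ioi (a := x₀) (fun x _ => hg x)
        hg'_int.integrableOn hg_int.integrableOn)
  have h_le_left : ‖g x₀‖ ≤ ∫ x in Set.Iic x₀, ‖g' x‖ := by
    simpa [h_left] using norm_integral_le_integral_norm (μ := volume.restrict (Set.Iic x₀)) g'
  have h_le_right : ‖g x₀‖ ≤ ∫ x in Set.Ioi x₀, ‖g' x‖ := by
    simpa [h_right] using norm_integral_le_integral_norm (μ := volume.restrict (Set.Ioi x₀)) g'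
  have h_split := intervalIntegral.integral_Iic_add_Ioi (b := x₀) hg'_int.norm.integrableOn
    hg'_int.norm.integrableOn
  linarith

theorem two_mul_abs_inner_mul_le {F : Type*} [NormedAddCommGroup F] [InnerProductSpace ℝ F]
    {m : ℝ} (hm : 0 ≤ m) (a b : F) :
    |2 * m * inner ℝ a b| ≤ m ^ 2 * ‖a‖ ^ 2 + ‖b‖ ^ 2 := by
  calc |2 * m * inner ℝ a b| = 2 * m * |inner ℝ a b| := by
        rw [abs_mul, abs_of_nonneg (by positivity)]
    _ ≤ 2 * m * (‖a‖ * ‖b‖) := by gcongr; exact abs_real_inner_le_norm a b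
    _ = 2 * (m * ‖a‖) * ‖b‖ := by ring
    _ ≤ (m * ‖a‖) ^ 2 + ‖b‖ ^ 2 := two_mul_le_add_sq _ _
    _ = m ^ 2 * ‖a‖ ^ 2 + ‖b‖ ^ 2 := by ring

theorem two_mul_norm_sq_le_of_hasDerivAt {F : Type*} [NormedAddCommGroup F]
    [InnerProductSpace ℝ F] {m : ℝ} (hm : 0 ≤ m) {ψ ψ' : ℝ → F}
    (hψ_deriv : ∀ x, HasDerivAt ψ (ψ' x) x) (hψ : MemLp ψ 2) (hψ' : MemLp ψ' 2) (x₀ : ℝ) :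
    2 * m * ‖ψ x₀‖ ^ 2 ≤ (∫ x, ‖ψ' x‖ ^ 2) + m ^ 2 * ∫ x, ‖ψ x‖ ^ 2 := by
  have hψ_sq : Integrable (fun x => ‖ψ x‖ ^ 2) := (memLp_two_iff_integrable_sq_norm hψ.1).1 hψ
  have hψ'_sq : Integrable (fun x => ‖ψ' x‖ ^ 2) := (memLp_two_iff_integrable_sq_norm hψ'.1).1 hψ'
  have h_dom : Integrable (fun x => m ^ 2 * ‖ψ x‖ ^ 2 + ‖ψ' x‖ ^ 2) :=
    (hψ_sq.const_mul _).add hψ'_sq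
  have h_bound (x : ℝ) : ‖2 * m * inner ℝ (ψ x) (ψ' x)‖ ≤ m ^ 2 * ‖ψ x‖ ^ 2 + ‖ψ' x‖ ^ 2 :=
    two_mul_abs_inner_mul_le hm (ψ x) (ψ' x)
  have h_deriv (x : ℝ) :
      HasDerivAt (fun y => m * ‖ψ y‖ ^ 2) (2 * m * inner ℝ (ψ x) (ψ' x)) x :=
    ((hψ_deriv x).norm_sq.const_mul m).congr_deriv (by ring)
  have h_meas : AEStronglyMeasurable (fun x => 2 * m * inner ℝ (ψ x) (ψ' x)) :=
    (hψ.1.inner hψ'.1).const_mul _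
  have h_tails := two_mul_norm_le_integral_norm_deriv h_deriv (hψ_sq.const_mul m)
    (h_dom.mono' h_meas (.of_forall h_bound)) x₀
  calc 2 * m * ‖ψ x₀‖ ^ 2 = 2 * ‖m * ‖ψ x₀‖ ^ 2‖ := by
        rw [Real.norm_of_nonneg (by positivity)]; ring
    _ ≤ ∫ x, ‖2 * m * inner ℝ (ψ x) (ψ' x)‖ := h_tails
    _ ≤ ∫ x, (m ^ 2 * ‖ψ x‖ ^ 2 + ‖ψ' x‖ ^ 2) := integral_mono_of_nonneg
        (.of_forall fun _ => norm_nonneg _) h_dom (.of_forall h_bound)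
    _ = (∫ x, ‖ψ' x‖ ^ 2) + m ^ 2 * ∫ x, ‖ψ x‖ ^ 2 := by
        rw [integral_add (hψ_sq.const_mul _) hψ'_sq, integral_const_mul, add_comm]

theorem Finset.sum_sub_sum_mul_le_sum {ι : Type*} (s : Finset ι) {A B w u : ι → ℝ} {c : ℝ}
    (hB : ∀ i ∈ s, 0 ≤ B i) (hw : ∀ i ∈ s, w i ≤ c) (hu : ∀ i ∈ s, A i - B i * w i ≤ u i) :
    ∑ i ∈ s, A i - (∑ i ∈ s, B i) * c ≤ ∑ i ∈ s, u i := by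
  rw [Finset.sum_mul, ← Finset.sum_sub_distrib]
  exact Finset.sum_le_sum fun i hi =>
    (sub_le_sub_left (mul_le_mul_of_nonneg_left (hw i hi) (hB i hi)) _).trans (hu i hi)

theorem stmt_4_general (m : ℝ) (hm : 0 < m) (N : ℕ) (X : Fin N → ℝ)
    (A B : Fin N → ℝ) (hB : ∀ J, 0 ≤ B J) (hBsum : ∑ J, B J < m)
    (U : Fin N → ℂ → ℝ)
    (hU : ∀ J, ∀ z : ℂ, A J - B J * ‖z‖ ^ 2 ≤ U J z)
    (ψ ψ' π : ℝ → ℂ)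
    (hderiv : ∀ x, HasDerivAt ψ (ψ' x) x)
    (hψ : MemLp ψ 2 volume) (hψ' : MemLp ψ' 2 volume) :
    (∫ x, ‖π x‖ ^ 2) + (∫ x, ‖ψ' x‖ ^ 2) + m ^ 2 * ∫ x, ‖ψ x‖ ^ 2 ≤
      (2 * m / (m - ∑ J, B J)) *
        ((1 / 2 * ((∫ x, ‖π x‖ ^ 2) + (∫ x, ‖ψ' x‖ ^ 2) + m ^ 2 * ∫ x, ‖ψ x‖ ^ 2)
          + ∑ J, U J (ψ (X J))) - ∑ J, A J) := by
  set E := (∫ x, ‖π x‖ ^ 2) + (∫ x, ‖ψ' x‖ ^ 2) + m ^ 2 * ∫ x, ‖ψ x‖ ^ 2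
  have h_sobolev (J : Fin N) : ‖ψ (X J)‖ ^ 2 ≤ E / (2 * m) := by
    have h_kinetic : 0 ≤ ∫ x, ‖π x‖ ^ 2 := integral_nonneg fun x => sq_nonneg ‖π x‖
    rw [le_div_iff₀ (by positivity), mul_comm]
    linarith [two_mul_norm_sq_le_of_hasDerivAt hm.le hderiv hψ hψ' (X J)]
  have h_potential : ∑ J, A J - (∑ J, B J) * (E / (2 * m)) ≤ ∑ J, U J (ψ (X J)) :=
    Finset.univ.sum_sub_sum_mul_le_sum (fun J _ => hB J) (fun J _ => h_sobolev J)
      (fun J _ => hU J _)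
  have h_scaled : 2 * m * ∑ J, A J - (∑ J, B J) * E ≤ 2 * m * ∑ J, U J (ψ (X J)) :=
    calc 2 * m * ∑ J, A J - (∑ J, B J) * E
        = 2 * m * (∑ J, A J - (∑ J, B J) * (E / (2 * m))) := by field_simp
      _ ≤ 2 * m * ∑ J, U J (ψ (X J)) := by gcongr
  rw [div_mul_eq_mul_div, le_div_iff₀ (sub_pos.2 hBsum)]
  linarith

/-- Lower bound on the Hamiltonian: if `U_J(ψ) ≥ A_J − B_J|ψ|²` with `B_J ≥ 0` and
`∑ B_J < m`, then for `Ψ = (ψ, π) ∈ H¹(ℝ) × L²(ℝ)` one has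
`‖Ψ‖²_E ≤ (2m/(m − ∑B_J))·(H(Ψ) − ∑A_J)`, where
`‖Ψ‖²_E = ‖π‖²_{L²} + ‖ψ'‖²_{L²} + m²‖ψ‖²_{L²}` and
`H(Ψ) = ½‖Ψ‖²_E + ∑_J U_J(ψ(X_J))`. -/
theorem stmt_4 (m : ℝ) (hm : 0 < m) (N : ℕ) (X : Fin N → ℝ)
    (hX : ∀ i j : Fin N, i < j → X i < X j)
    (A B : Fin N → ℝ) (hB : ∀ J, 0 ≤ B J) (hBsum : ∑ J, B J < m)
    (U : Fin N → ℂ → ℝ)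
    (hU : ∀ J, ∀ z : ℂ, A J - B J * ‖z‖ ^ 2 ≤ U J z)
    (ψ ψ' π : ℝ → ℂ)
    (hderiv : ∀ x, HasDerivAt ψ (ψ' x) x)
    (hψ : MemLp ψ 2 volume) (hψ' : MemLp ψ' 2 volume) (hπ : MemLp π 2 volume) :
    (∫ x, ‖π x‖ ^ 2) + (∫ x, ‖ψ' x‖ ^ 2) + m ^ 2 * ∫ x, ‖ψ x‖ ^ 2 ≤
      (2 * m / (m - ∑ J, B J)) *
        ((1 / 2 * ((∫ x, ‖π x‖ ^ 2) + (∫ x, ‖ψ' x‖ ^ 2) + m ^ 2 * ∫ x, ‖ψ x‖ ^ 2)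
          + ∑ J, U J (ψ (X J))) - ∑ J, A J) :=
  stmt_4_general m hm N X A B hB hBsum U hU ψ ψ' π hderiv hψ hψ'
end

section
/- For N point interactions at X_1 < ⋯ < X_N and ω ∈ (−m, m) with κ(ω) = √(m² − ω²), the profile φ_ω(x) = ∑_J C_J e^{−κ(ω)|x−X_J|} gives a solitary wave solution φ_ω(x)e^{−iωt} of ψ̈ = ψ'' − m²ψ + ∑_J δ(x−X_J)F_J(ψ(X_J,t)) if and only if the coefficients satisfy 2κ(ω)C_J = F_J(∑_K C_K e^{−κ(ω)|X_J − X_K|}) for every J. -/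
/-!
Each summand `e^{−κ|x−a|}` is, on either side of `a`, an exponential `e^{±κ(x−a)}`, so away from
the points `X_J` the profile is locally a combination of exponentials whose exponents all square to
`κ² = m² − ω²`, and it solves `φ'' = κ²φ` there. At `X_J` only the `J`-th summand has a kink: its
one-sided slopes are `∓κ C_J`, while the other summands are smooth. Hence the jump of `φ'` at `X_J`
is `−2κ C_J`, and the jump conditions are exactly `2κ C_J = F_J(φ(X_J))`.
-/

open Set Filter Topology

noncomputable section

namespace SolitaryWave

def expAbs (κ a : ℝ) : ℝ → ℂ := fun y => Complex.exp (((-(κ * |y - a|)) : ℝ) : ℂ)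

theorem hasDerivAt_cexp_mul_sub (c : ℂ) (a x : ℝ) :
    HasDerivAt (fun y : ℝ => Complex.exp (c * (y - a))) (c * Complex.exp (c * (x - a))) x := by
  have hlin : HasDerivAt (fun y : ℝ => c * ((y : ℂ) - a)) c x := by
    simpa using ((Complex.ofRealCLM.hasDerivAt (x := x)).sub_const (a : ℂ)).const_mul c
  simpa [mul_comm] using hlin.cexp

theorem expAbs_of_le {κ a y : ℝ} (h : a ≤ y) :
    expAbs κ a y = Complex.exp (-κ * (y - a)) := by
  simp only [expAbs, abs_of_nonneg (sub_nonneg.2 h)]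
  push_cast
  ring_nf

theorem expAbs_of_ge {κ a y : ℝ} (h : y ≤ a) :
    expAbs κ a y = Complex.exp (κ * (y - a)) := by
  simp only [expAbs, abs_of_nonpos (sub_nonpos.2 h)]
  push_cast
  ring_nf

theorem expAbs_self (κ a : ℝ) : expAbs κ a a = 1 := by
  simp [expAbs]

theorem expAbs_eventuallyEq {κ a x : ℝ} (hx : x ≠ a) :
    expAbs κ a =ᶠ[𝓝 x] fun y => Complex.exp ((if a ≤ x then -κ else κ : ℂ) * (y - a)) := by
  rcases hx.lt_or_gt with hlt | hgt
  · filter_upwards [Iio_mem_nhds hlt] with y hy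
    rw [if_neg (not_le.2 hlt), expAbs_of_ge hy.le]
  · filter_upwards [Ioi_mem_nhds hgt] with y hy
    rw [if_pos hgt.le, expAbs_of_le hy.le]

theorem expAbs_hasDerivWithinAt_Ioi (κ a x : ℝ) :
    HasDerivWithinAt (expAbs κ a) ((if a ≤ x then -κ else κ : ℂ) * expAbs κ a x) (Ioi x) x := by
  by_cases h : a ≤ x
  · have hloc : expAbs κ a =ᶠ[𝓝[Ioi x] x] fun y => Complex.exp (-κ * (y - a)) :=
      eventually_nhdsWithin_of_forall fun y hy => expAbs_of_le (h.trans (le_of_lt hy))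
    rw [if_pos h, expAbs_of_le h]
    exact (hasDerivAt_cexp_mul_sub _ a x).hasDerivWithinAt.congr_of_eventuallyEq hloc
      (expAbs_of_le h)
  · have hloc := expAbs_eventuallyEq (κ := κ) (ne_of_lt (not_le.1 h))
    rw [hloc.eq_of_nhds]
    exact (hasDerivAt_cexp_mul_sub _ a x).hasDerivWithinAt.congr_of_eventuallyEq
      (nhdsWithin_le_nhds hloc) hloc.eq_of_nhds

theorem expAbs_hasDerivWithinAt_Iio (κ a x : ℝ) :
    HasDerivWithinAt (expAbs κ a) ((if x ≤ a then κ else -κ : ℂ) * expAbs κ a x) (Iio x) x := by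
  by_cases h : x ≤ a
  · have hloc : expAbs κ a =ᶠ[𝓝[Iio x] x] fun y => Complex.exp (κ * (y - a)) :=
      eventually_nhdsWithin_of_forall fun y hy => expAbs_of_ge ((le_of_lt hy).trans h)
    rw [if_pos h, expAbs_of_ge h]
    exact (hasDerivAt_cexp_mul_sub _ a x).hasDerivWithinAt.congr_of_eventuallyEq hloc
      (expAbs_of_ge h)
  · have hloc := expAbs_eventuallyEq (κ := κ) (ne_of_gt (not_le.1 h))
    simp only [if_pos (not_le.1 h).le] at hloc
    rw [if_neg h, hloc.eq_of_nhds]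
    exact (hasDerivAt_cexp_mul_sub _ a x).hasDerivWithinAt.congr_of_eventuallyEq
      (nhdsWithin_le_nhds hloc) hloc.eq_of_nhds

theorem expAbs_slope_jump (κ a x : ℝ) :
    (if a ≤ x then -κ else κ : ℂ) - (if x ≤ a then κ else -κ : ℂ) =
      (if a = x then -(2 * κ) else 0 : ℂ) := by
  rcases lt_trichotomy a x with h | rfl | h
  · simp [h.le, not_le.2 h, h.ne]
  · simp; ring
  · simp [h.le, not_le.2 h, h.ne']

variable {ι : Type*} [Fintype ι]

theorem ode_of_eventuallyEq_sum_cexp {f : ℝ → ℂ} {x : ℝ} {μ : ℂ} (C c : ι → ℂ) (b : ι → ℝ)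
    (hc : ∀ i, c i ^ 2 = μ)
    (hf : f =ᶠ[𝓝 x] fun y => ∑ i, C i * Complex.exp (c i * (y - b i))) :
    DifferentiableAt ℝ f x ∧ DifferentiableAt ℝ (deriv f) x ∧ deriv (deriv f) x = μ * f x := by
  set g : ℝ → ℂ := fun y => ∑ i, C i * Complex.exp (c i * (y - b i))
  set g' : ℝ → ℂ := fun y => ∑ i, C i * c i * Complex.exp (c i * (y - b i))
  have hg : ∀ y, HasDerivAt g (g' y) y := fun y =>
    (HasDerivAt.fun_sum fun i _ => (hasDerivAt_cexp_mul_sub (c i) (b i) y).const_mul (C i))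
      |>.congr_deriv (Finset.sum_congr rfl fun i _ => by ring)
  have hg' : ∀ y : ℝ, HasDerivAt g' (∑ i, C i * c i * (c i * Complex.exp (c i * (y - b i)))) y :=
    fun y => HasDerivAt.fun_sum fun i _ =>
      (hasDerivAt_cexp_mul_sub (c i) (b i) y).const_mul (C i * c i)
  have hdf : deriv f =ᶠ[𝓝 x] g' := by
    simpa only [funext fun y => (hg y).deriv] using hf.deriv
  refine ⟨(hg x).differentiableAt.congr_of_eventuallyEq hf,
    (hg' x).differentiableAt.congr_of_eventuallyEq hdf, ?_⟩
  rw [((hg' x).congr_of_eventuallyEq hdf).deriv, hf.eq_of_nhds, Finset.mul_sum]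
  refine Finset.sum_congr rfl fun i _ => ?_
  rw [← hc i]
  ring

theorem ode_sum_expAbs (κ : ℝ) (X : ι → ℝ) (C : ι → ℂ) {f : ℝ → ℂ}
    (hf : ∀ y, f y = ∑ i, C i * expAbs κ (X i) y) {x : ℝ} (hx : ∀ i, x ≠ X i) :
    DifferentiableAt ℝ f x ∧ DifferentiableAt ℝ (deriv f) x ∧
      deriv (deriv f) x = (κ : ℂ) ^ 2 * f x := by
  refine ode_of_eventuallyEq_sum_cexp C (fun i => if X i ≤ x then -κ else κ) X
    (fun i => by split_ifs <;> ring) ?_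
  filter_upwards [eventually_all.2 fun i => expAbs_eventuallyEq (κ := κ) (hx i)] with y hy
  exact (hf y).trans (Finset.sum_congr rfl fun i _ => by rw [hy i])

theorem sum_expAbs_jump (κ : ℝ) {X : ι → ℝ} (hX : Function.Injective X) (C : ι → ℂ) (j : ι) :
    ∑ i, C i * ((if X i ≤ X j then -κ else κ : ℂ) * expAbs κ (X i) (X j))
      - ∑ i, C i * ((if X j ≤ X i then κ else -κ : ℂ) * expAbs κ (X i) (X j))
      = -(2 * κ * C j) := by
  simp_rw [← Finset.sum_sub_distrib, ← mul_sub, ← sub_mul, expAbs_slope_jump]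
  rw [Finset.sum_eq_single_of_mem j (Finset.mem_univ j), if_pos rfl, expAbs_self]
  · ring
  · intro i _ hi
    simp [hX.ne hi]

end SolitaryWave

open SolitaryWave in
theorem stmt_10_general (m ω : ℝ) (hω : |ω| < m)
    (κ : ℝ) (hκ : κ = Real.sqrt (m ^ 2 - ω ^ 2))
    (N : ℕ) (X : Fin N → ℝ) (hX : ∀ i j : Fin N, i < j → X i < X j)
    (F : Fin N → ℂ → ℂ)
    (C : Fin N → ℂ) (φ : ℝ → ℂ)
    (hφ : ∀ x : ℝ, φ x = ∑ J, C J * Complex.exp (((-(κ * |x - X J|)) : ℝ) : ℂ)) :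
    ((∀ x : ℝ, x ∉ Set.range X → DifferentiableAt ℝ φ x ∧ DifferentiableAt ℝ (deriv φ) x ∧
        deriv (deriv φ) x = (((m ^ 2 - ω ^ 2 : ℝ)) : ℂ) * φ x) ∧
      (∀ J : Fin N, ∃ dplus dminus : ℂ,
        HasDerivWithinAt φ dplus (Ioi (X J)) (X J) ∧
        HasDerivWithinAt φ dminus (Iio (X J)) (X J) ∧
        dplus - dminus = -(F J (φ (X J)))))
    ↔ ∀ J : Fin N,
        2 * (κ : ℂ) * C J
          = F J (∑ K, C K * Complex.exp (((-(κ * |X J - X K|)) : ℝ) : ℂ)) := by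
  obtain rfl : φ = fun y => ∑ K, C K * expAbs κ (X K) y := funext hφ
  have hinj : Function.Injective X := StrictMono.injective fun i j => hX i j
  have hκsq : ((m ^ 2 - ω ^ 2 : ℝ) : ℂ) = (κ : ℂ) ^ 2 := by
    rw [hκ, ← Complex.ofReal_pow, Real.sq_sqrt (by nlinarith [abs_nonneg ω, sq_abs ω])]
  have hright := fun J => HasDerivWithinAt.fun_sum (u := Finset.univ) fun K _ =>
    (expAbs_hasDerivWithinAt_Ioi κ (X K) (X J)).const_mul (C K)
  have hleft := fun J => HasDerivWithinAt.fun_sum (u := Finset.univ) fun K _ =>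
    (expAbs_hasDerivWithinAt_Iio κ (X K) (X J)).const_mul (C K)
  constructor
  · rintro ⟨-, hjump⟩ J
    obtain ⟨dplus, dminus, hplus, hminus, hdiff⟩ := hjump J
    rw [(uniqueDiffWithinAt_Ioi _).eq_deriv _ hplus (hright J),
      (uniqueDiffWithinAt_Iio _).eq_deriv _ hminus (hleft J), sum_expAbs_jump κ hinj] at hdiff
    exact neg_injective hdiff
  · intro hcoeff
    refine ⟨fun x hx => ?_, fun J => ⟨_, _, hright J, hleft J, ?_⟩⟩
    · rw [hκsq]
      exact ode_sum_expAbs κ X C (fun _ => rfl) fun K hK => hx ⟨K, hK.symm⟩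
    · rw [sum_expAbs_jump κ hinj, hcoeff J]
      rfl

/-- Solitary waves for the Klein-Gordon field coupled to `N` oscillators:
the profile `φ_ω(x) = ∑_J C_J e^{−κ(ω)|x−X_J|}` gives a solitary wave
`φ_ω(x)e^{−iωt}` of `ψ̈ = ψ'' − m²ψ + ∑_J δ(x−X_J)F_J(ψ(X_J,t))`
(i.e. `φ'' = κ²φ = (m²−ω²)φ` away from the points `X_J` together with the jump
conditions `φ'(X_J+0) − φ'(X_J−0) = −F_J(φ(X_J))`) if and only if
`2κ(ω)C_J = F_J(∑_K C_K e^{−κ(ω)|X_J−X_K|})` for every `J`. -/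
theorem stmt_10 (m ω : ℝ) (hm : 0 < m) (hω : |ω| < m)
    (κ : ℝ) (hκ : κ = Real.sqrt (m ^ 2 - ω ^ 2))
    (N : ℕ) (X : Fin N → ℝ) (hX : ∀ i j : Fin N, i < j → X i < X j)
    (F : Fin N → ℂ → ℂ)
    (hF : ∀ J, ∀ θ : ℝ, ∀ z : ℂ,
      F J (Complex.exp ((θ : ℂ) * Complex.I) * z)
        = Complex.exp ((θ : ℂ) * Complex.I) * F J z)
    (C : Fin N → ℂ) (φ : ℝ → ℂ)
    (hφ : ∀ x : ℝ, φ x = ∑ J, C J * Complex.exp (((-(κ * |x - X J|)) : ℝ) : ℂ)) :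
    ((∀ x : ℝ, x ∉ Set.range X → DifferentiableAt ℝ φ x ∧ DifferentiableAt ℝ (deriv φ) x ∧
        deriv (deriv φ) x = (((m ^ 2 - ω ^ 2 : ℝ)) : ℂ) * φ x) ∧
      (∀ J : Fin N, ∃ dplus dminus : ℂ,
        HasDerivWithinAt φ dplus (Ioi (X J)) (X J) ∧
        HasDerivWithinAt φ dminus (Iio (X J)) (X J) ∧
        dplus - dminus = -(F J (φ (X J)))))
    ↔ ∀ J : Fin N,
        2 * (κ : ℂ) * C J
          = F J (∑ K, C K * Complex.exp (((-(κ * |X J - X K|)) : ℝ) : ℂ)) :=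
  stmt_10_general m ω hω κ hκ N X hX F C φ hφ
end
end
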